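/- arXiv:1609.00595 — 8 statements merged into one kernel-verified Lean document; each statement's English description precedes it below -/
import Mathlib

section
/- Let P be a rooted finite poset and Q a finite poset. Let φ : P → Q be an isotone map and let ψ : P → Q be a map for which there exists p ∈ P satisfying: (i) ψ(p₁) ≥ ψ(p₂) for all p₁ ≥ p₂ ≥ p; (ii) ψ(q) = φ(q) for all q ∈ P with q ≱ p; (iii) if p has a lower neighbor q then ψ(p) ≥ ψ(q). Then ψ is isotone. -/
/-!
Compare `ψ x` and `ψ y` for `x ≤ y`. If both lie above `p` or neither does, the hypotheses on
`ψ` above `p`, resp. monotonicity of `φ`, apply directly. Otherwise `x ≱ p ≤ y`, and rootedness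
forces `x < p`; a lower neighbour `q` of `p` above `x` then gives
`ψ x = φ x ≤ φ q = ψ q ≤ ψ p ≤ ψ y`.
-/

section

variable {P Q : Type*} [PartialOrder P] [Preorder Q] {x y p : P}

lemma lt_of_le_of_le_of_not_le (hroot : ∀ a b c : P, a ≤ c → b ≤ c → a ≤ b ∨ b ≤ a)
    (hxy : x ≤ y) (hpy : p ≤ y) (hpx : ¬ p ≤ x) : x < p :=
  (hroot x p y hxy hpy).resolve_right hpx |>.lt_of_not_ge hpx

lemma le_of_lt_of_eq_outside_Ici [IsStronglyCoatomic P] {φ ψ : P → Q} (hφ : Monotone φ)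
    (h2 : ∀ q : P, ¬ p ≤ q → ψ q = φ q) (h3 : ∀ q : P, q ⋖ p → ψ q ≤ ψ p) (hxp : x < p) :
    ψ x ≤ ψ p := by
  obtain ⟨q, hxq, hqp⟩ := exists_le_covBy_of_lt hxp
  calc ψ x = φ x := h2 x hxp.not_ge
    _ ≤ φ q := hφ hxq
    _ = ψ q := (h2 q hqp.lt.not_ge).symm
    _ ≤ ψ p := h3 q hqp

end

theorem statement0_general {P Q : Type} [PartialOrder P] [Fintype P] [PartialOrder Q]
    (hroot : ∀ a b c : P, a ≤ c → b ≤ c → a ≤ b ∨ b ≤ a)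
    (φ : P →o Q) (ψ : P → Q) (p : P)
    (h1 : ∀ p₁ p₂ : P, p ≤ p₂ → p₂ ≤ p₁ → ψ p₂ ≤ ψ p₁)
    (h2 : ∀ q : P, ¬ p ≤ q → ψ q = φ q)
    (h3 : ∀ q : P, q ⋖ p → ψ q ≤ ψ p) :
    Monotone ψ := by
  intro x y hxy
  by_cases hpx : p ≤ x
  · exact h1 y x hpx hxy
  by_cases hpy : p ≤ y
  · have hxp : x < p := lt_of_le_of_le_of_not_le hroot hxy hpy hpx
    exact (le_of_lt_of_eq_outside_Ici φ.monotone h2 h3 hxp).trans (h1 y p le_rfl hpy)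
  · rw [h2 x hpx, h2 y hpy]
    exact φ.monotone hxy

/-- Lemma 1 (map modification lemma): if `P` is rooted (least element, and any two
elements with a common upper bound are comparable), `φ : P →o Q` is isotone and
`ψ : P → Q` agrees with `φ` outside the filter `{q : p ≤ q}`, is order preserving
above `p`, and respects the lower neighbor of `p` (if any), then `ψ` is isotone. -/
theorem statement0 {P Q : Type} [PartialOrder P] [Fintype P] [PartialOrder Q] [Fintype Q]
    (hmin : ∃ p₀ : P, ∀ x : P, p₀ ≤ x)
    (hroot : ∀ a b c : P, a ≤ c → b ≤ c → a ≤ b ∨ b ≤ a)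
    (φ : P →o Q) (ψ : P → Q) (p : P)
    (h1 : ∀ p₁ p₂ : P, p ≤ p₂ → p₂ ≤ p₁ → ψ p₂ ≤ ψ p₁)
    (h2 : ∀ q : P, ¬ p ≤ q → ψ q = φ q)
    (h3 : ∀ q : P, q ⋖ p → ψ q ≤ ψ p) :
    Monotone ψ :=
  statement0_general hroot φ ψ p h1 h2 h3
end

section
/- Let P and Q be finite posets, K a field, and let φ₁, …, φ_d and ψ₁, …, ψ_d be isotone maps from P to Q. Then the binomial ∏_{i=1}^d t_{φ_i} − ∏_{i=1}^d t_{ψ_i} belongs to J_{P,Q} if and only if for every p ∈ P the multisets {φ₁(p), φ₂(p), …, φ_d(p)} and {ψ₁(p), ψ₂(p), …, ψ_d(p)} are equal. -/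
open MvPolynomial

/-- The `K`-algebra map sending the variable `t_φ` (indexed by an isotone map
`φ : P →o Q`) to the monomial `∏_{p ∈ P} x_{p, φ(p)}`. -/
noncomputable def isotonianMap (K P Q : Type) [Field K] [PartialOrder P] [Fintype P]
    [PartialOrder Q] [Fintype Q] :
    MvPolynomial (P →o Q) K →ₐ[K] MvPolynomial (P × Q) K :=
  aeval fun φ : P →o Q => ∏ p : P, X (p, φ p)

/-- The defining ideal `J_{P,Q}` of the isotonian algebra `K[P,Q]`. -/
noncomputable def isotonianIdeal (K P Q : Type) [Field K] [PartialOrder P] [Fintype P]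
    [PartialOrder Q] [Fintype Q] :
    Ideal (MvPolynomial (P →o Q) K) :=
  RingHom.ker (isotonianMap K P Q)

/-- A product of variables in a multivariate polynomial ring is the monomial whose
exponent vector is the sum of the corresponding single exponents. -/
lemma prod_X_eq_monomial' {R σ ι : Type*} [CommSemiring R] (s : Finset ι) (f : ι → σ) :
    (∏ i ∈ s, (X (f i) : MvPolynomial σ R)) =
      monomial (∑ i ∈ s, Finsupp.single (f i) 1) 1 := by
  induction s using Finset.cons_induction with
  | empty => simp [monomial_zero']
  | cons a s ha ih => rw [Finset.prod_cons, ih, Finset.sum_cons, X, monomial_mul, one_mul]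

theorem statement1 (K P Q : Type) [Field K] [PartialOrder P] [Fintype P]
    [PartialOrder Q] [Fintype Q] (d : ℕ) (φ ψ : Fin d → P →o Q) :
    ((∏ i, X (φ i)) - ∏ i, X (ψ i) : MvPolynomial (P →o Q) K) ∈ isotonianIdeal K P Q ↔
      ∀ p : P, Multiset.map (fun i => φ i p) (Finset.univ : Finset (Fin d)).val =
        Multiset.map (fun i => ψ i p) (Finset.univ : Finset (Fin d)).val := by
  classical
  have key : ∀ (χ : Fin d → P →o Q) (p : P) (q : Q),
      (∑ ip : Fin d × P, (Finsupp.single ((ip.2, χ ip.1 ip.2) : P × Q) 1) (p, q)) =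
        Multiset.count q (Multiset.map (fun i => χ i p) (Finset.univ : Finset (Fin d)).val) := by
    intro χ p q
    rw [Multiset.count_map, ← Finset.filter_val, Finset.card_val, Finset.card_filter,
      Fintype.sum_prod_type]
    refine Finset.sum_congr rfl fun i _ => ?_
    simp [Finsupp.single_apply, Prod.ext_iff, ite_and, eq_comm]
  rw [isotonianIdeal, RingHom.mem_ker, map_sub, sub_eq_zero, isotonianMap]
  simp only [AlgHom.coe_mk, map_prod, aeval_X]
  rw [← Finset.prod_product' (f := fun i p => (X (p, φ i p) : MvPolynomial (P × Q) K)),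
    ← Finset.prod_product' (f := fun i p => (X (p, ψ i p) : MvPolynomial (P × Q) K)),
    prod_X_eq_monomial' _ (fun ip : Fin d × P => ((ip.2, φ ip.1 ip.2) : P × Q)),
    prod_X_eq_monomial' _ (fun ip : Fin d × P => ((ip.2, ψ ip.1 ip.2) : P × Q)),
    monomial_eq_monomial_iff]
  simp only [and_true, one_ne_zero, and_false, or_false]
  rw [Finsupp.ext_iff]
  constructor
  · intro h p
    ext q
    rw [← key φ p q, ← key ψ p q]
    simpa [Finsupp.finset_sum_apply] using h (p, q)
  · rintro h ⟨p, q⟩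
    have := congrArg (Multiset.count q) (h p)
    rw [← key φ p q, ← key ψ p q] at this
    simpa [Finsupp.finset_sum_apply] using this
end

section
/- Let P be a rooted finite poset, Q a finite poset, and K a field. Let φ₁, …, φ_d be isotone maps from P to Q, let p ∈ P, and let π be a permutation of {1, …, d} such that, if p has a lower neighbor p′, then φ_{π(i)}(p) ≥ φ_i(p′) for all i. Define φ′_i : P → Q by φ′_i(q) = φ_{π(i)}(q) if q ≥ p and φ′_i(q) = φ_i(q) otherwise. Then each φ′_i is isotone, and the special binomial f = ∏_{i=1}^d t_{φ_i} − ∏_{i=1}^d t_{φ′_i} belongs to J_{P,Q}. -/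
open MvPolynomial

/-!
The glued map agrees with the isotone `g` on the up-set `↑p` and with the isotone `f`
elsewhere, so monotonicity can only fail across the boundary, for `a ≤ b` with `a ∉ ↑p ∋ b`.
Rootedness forces `a < p`, hence `a ≤ p' ⋖ p` for the lower neighbour `p'`, and the cover
condition gives `f a ≤ f p' ≤ g p ≤ g b`.
The binomial lies in `J_{P,Q}` because for every `q` the multiset `{φ'ᵢ(q)}` is a
permutation of `{φᵢ(q)}`, so both products map to `∏_q ∏_i x_{q, φᵢ(q)}`.
-/

theorem monotone_of_eq_on_Ici_of_eq_off_Ici {P Q : Type*} [PartialOrder P]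
    [IsStronglyCoatomic P] [Preorder Q] {f g : P →o Q} {h : P → Q} {p : P}
    (hroot : ∀ a b c : P, a ≤ c → b ≤ c → a ≤ b ∨ b ≤ a)
    (hcov : ∀ p' : P, p' ⋖ p → f p' ≤ g p)
    (hup : ∀ q, p ≤ q → h q = g q) (hdown : ∀ q, ¬ p ≤ q → h q = f q) :
    Monotone h := by
  intro a b hab
  by_cases hpa : p ≤ a
  · rw [hup a hpa, hup b (hpa.trans hab)]
    exact g.monotone hab
  by_cases hpb : p ≤ b
  · rw [hdown a hpa, hup b hpb]
    have hap : a < p := ((hroot a p b hab hpb).resolve_right hpa).lt_of_not_ge hpa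
    obtain ⟨p', hap', hp'p⟩ := exists_le_covBy_of_lt hap
    calc f a ≤ f p' := f.monotone hap'
      _ ≤ g p := hcov p' hp'p
      _ ≤ g b := g.monotone hpb
  · rw [hdown a hpa, hdown b hpb]
    exact f.monotone hab

section Isotonian

variable {K P Q : Type} [Field K] [PartialOrder P] [Fintype P] [PartialOrder Q] [Fintype Q]

theorem isotonianMap_prod_X {ι : Type*} [Fintype ι] (φ : ι → P →o Q) :
    isotonianMap K P Q (∏ i, X (φ i)) = ∏ q : P, ∏ i, X (q, φ i q) := by
  simp only [map_prod, isotonianMap, aeval_X]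
  exact Finset.prod_comm

theorem prod_X_sub_prod_X_mem_isotonianIdeal {ι : Type*} [Fintype ι] (φ ψ : ι → P →o Q)
    (σ : P → Equiv.Perm ι) (hψ : ∀ i q, ψ i q = φ (σ q i) q) :
    (∏ i, X (φ i)) - ∏ i, X (ψ i) ∈ isotonianIdeal K P Q := by
  rw [isotonianIdeal, RingHom.mem_ker, map_sub, sub_eq_zero, isotonianMap_prod_X,
    isotonianMap_prod_X]
  refine Finset.prod_congr rfl fun q _ => ?_
  simp only [hψ]
  exact (Equiv.prod_comp (σ q) fun j => (X (q, φ j q) : MvPolynomial (P × Q) K)).symm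

end Isotonian

theorem statement2_general (K P Q : Type) [Field K] [PartialOrder P] [Fintype P]
    [PartialOrder Q] [Fintype Q]
    (hroot : ∀ a b c : P, a ≤ c → b ≤ c → a ≤ b ∨ b ≤ a)
    (d : ℕ) (φ : Fin d → P →o Q) (p : P) (π : Equiv.Perm (Fin d))
    (hπ : ∀ p' : P, p' ⋖ p → ∀ i, φ i p' ≤ φ (π i) p)
    (φ' : Fin d → P → Q)
    (hup : ∀ i q, p ≤ q → φ' i q = φ (π i) q)
    (hdown : ∀ i q, ¬ p ≤ q → φ' i q = φ i q) :
    ∃ hm : ∀ i, Monotone (φ' i),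
      ((∏ i, X (φ i)) - ∏ i, X (⟨φ' i, hm i⟩ : P →o Q) : MvPolynomial (P →o Q) K) ∈
        isotonianIdeal K P Q := by
  classical
  have hm : ∀ i, Monotone (φ' i) := fun i =>
    monotone_of_eq_on_Ici_of_eq_off_Ici hroot (fun p' hp' => hπ p' hp' i) (hup i) (hdown i)
  refine ⟨hm, prod_X_sub_prod_X_mem_isotonianIdeal φ _ (fun q => if p ≤ q then π else 1) ?_⟩
  intro i q
  by_cases hpq : p ≤ q
  · simp [hpq, hup i q hpq]
  · simp [hpq, hdown i q hpq]

/-- Special binomials: the modified maps `φ'ᵢ` are isotone and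
`∏ t_{φᵢ} - ∏ t_{φ'ᵢ}` lies in `J_{P,Q}`. -/
theorem statement2 (K P Q : Type) [Field K] [PartialOrder P] [Fintype P]
    [PartialOrder Q] [Fintype Q]
    (hmin : ∃ p₀ : P, ∀ x : P, p₀ ≤ x)
    (hroot : ∀ a b c : P, a ≤ c → b ≤ c → a ≤ b ∨ b ≤ a)
    (d : ℕ) (φ : Fin d → P →o Q) (p : P) (π : Equiv.Perm (Fin d))
    (hπ : ∀ p' : P, p' ⋖ p → ∀ i, φ i p' ≤ φ (π i) p)
    (φ' : Fin d → P → Q)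
    (hup : ∀ i q, p ≤ q → φ' i q = φ (π i) q)
    (hdown : ∀ i q, ¬ p ≤ q → φ' i q = φ i q) :
    ∃ hm : ∀ i, Monotone (φ' i),
      ((∏ i, X (φ i)) - ∏ i, X (⟨φ' i, hm i⟩ : P →o Q) : MvPolynomial (P →o Q) K) ∈
        isotonianIdeal K P Q :=
  statement2_general K P Q hroot d φ p π hπ φ' hup hdown
end

section
/- Let P and Q be finite posets and K a field. If φ₁, ψ₁, ψ₂ are isotone maps from P to Q such that the binomial t_{φ₁}² − t_{ψ₁} t_{ψ₂} belongs to J_{P,Q}, then ψ₁ = ψ₂ = φ₁; consequently every nonzero quadratic binomial in J_{P,Q} is squarefree. -/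
open MvPolynomial

/-- A binomial `monomial u 1 - monomial v 1` which is quadratic: both monomials have degree 2. -/
def IsQuadraticBinomial {σ K : Type} [Field K] (f : MvPolynomial σ K) : Prop :=
  ∃ u v : σ →₀ ℕ, (u.sum fun _ e => e) = 2 ∧ (v.sum fun _ e => e) = 2 ∧
    f = monomial u 1 - monomial v 1

/-- A binomial `monomial u 1 - monomial v 1` which is squarefree: all exponents are at most 1. -/
def IsSquarefreeBinomial {σ K : Type} [Field K] (f : MvPolynomial σ K) : Prop :=
  ∃ u v : σ →₀ ℕ, (∀ i, u i ≤ 1) ∧ (∀ i, v i ≤ 1) ∧ f = monomial u 1 - monomial v 1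

lemma aux_sum_split {σ : Type} (w : σ →₀ ℕ) (a : σ) :
    (w.sum fun _ e => e) = w a + ((w.erase a).sum fun _ e => e) := by
  conv_lhs => rw [← Finsupp.single_add_erase a w]
  rw [Finsupp.sum_add_index' (fun _ => rfl) (fun _ _ _ => rfl),
    Finsupp.sum_single_index rfl]

lemma aux_sum_eq_one_exists {σ : Type} (w : σ →₀ ℕ) (h : (w.sum fun _ e => e) = 1) :
    ∃ a, w = Finsupp.single a 1 := by
  have hw : w ≠ 0 := by rintro rfl; simp [Finsupp.sum] at h
  obtain ⟨a, ha⟩ := Finsupp.ne_iff.mp hw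
  simp only [Finsupp.coe_zero, Pi.zero_apply] at ha
  have hs := aux_sum_split w a
  rw [h] at hs
  have h1 : w a = 1 ∧ ((w.erase a).sum fun _ e => e) = 0 := by omega
  have h0 : w.erase a = 0 := by
    ext i
    by_contra hi
    have : i ∈ (w.erase a).support := Finsupp.mem_support_iff.mpr (by simpa using hi)
    have := Finset.sum_eq_zero_iff.mp h1.2 i this
    simp at this
    exact hi (by simpa using this)
  refine ⟨a, ?_⟩
  rw [← Finsupp.single_add_erase a w, h0, h1.1, add_zero]

lemma aux_sum_eq_two_exists {σ : Type} (w : σ →₀ ℕ) (h : (w.sum fun _ e => e) = 2) :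
    ∃ a b, w = Finsupp.single a 1 + Finsupp.single b 1 := by
  have hw : w ≠ 0 := by rintro rfl; simp [Finsupp.sum] at h
  obtain ⟨a, ha⟩ := Finsupp.ne_iff.mp hw
  simp only [Finsupp.coe_zero, Pi.zero_apply] at ha
  have hs := aux_sum_split w a
  rw [h] at hs
  rcases Nat.lt_or_ge (w a) 2 with h1 | h2
  · have hwa : w a = 1 := by omega
    have : ((w.erase a).sum fun _ e => e) = 1 := by omega
    obtain ⟨b, hb⟩ := aux_sum_eq_one_exists _ this
    refine ⟨b, a, ?_⟩
    rw [← Finsupp.single_add_erase a w, hb, hwa, add_comm]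
  · have hwa : w a = 2 := by
      have : ((w.erase a).sum fun _ e => e) ≥ 0 := Nat.zero_le _
      omega
    have h0 : w.erase a = 0 := by
      have he : ((w.erase a).sum fun _ e => e) = 0 := by omega
      ext i
      by_contra hi
      have : i ∈ (w.erase a).support := Finsupp.mem_support_iff.mpr (by simpa using hi)
      have := Finset.sum_eq_zero_iff.mp he i this
      simp at this
      exact hi (by simpa using this)
    refine ⟨a, a, ?_⟩
    rw [← Finsupp.single_add_erase a w, h0, hwa, add_zero, ← Finsupp.single_add]

lemma aux_monomial_pair {σ K : Type} [Field K] (a b : σ) :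
    monomial (Finsupp.single a 1 + Finsupp.single b 1) (1 : K) = X a * X b := by
  rw [X, X, monomial_mul, one_mul]

/-- If `t_{φ₁}² - t_{ψ₁} t_{ψ₂} ∈ J_{P,Q}` then `ψ₁ = ψ₂ = φ₁`; consequently every
nonzero quadratic binomial in `J_{P,Q}` is squarefree. -/
theorem statement4 (K P Q : Type) [Field K] [PartialOrder P] [Fintype P]
    [PartialOrder Q] [Fintype Q] :
    (∀ φ₁ ψ₁ ψ₂ : P →o Q,
      ((X φ₁) ^ 2 - X ψ₁ * X ψ₂ : MvPolynomial (P →o Q) K) ∈ isotonianIdeal K P Q →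
        ψ₁ = φ₁ ∧ ψ₂ = φ₁) ∧
    (∀ f : MvPolynomial (P →o Q) K, f ∈ isotonianIdeal K P Q → IsQuadraticBinomial f →
      f ≠ 0 → IsSquarefreeBinomial f) := by
  classical
  have part1 : ∀ φ₁ ψ₁ ψ₂ : P →o Q,
      ((X φ₁) ^ 2 - X ψ₁ * X ψ₂ : MvPolynomial (P →o Q) K) ∈ isotonianIdeal K P Q →
        ψ₁ = φ₁ ∧ ψ₂ = φ₁ := by
    intro φ₁ ψ₁ ψ₂ h
    rw [isotonianIdeal, RingHom.mem_ker] at h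
    have h2 := congrArg (aeval fun pq : P × Q => if pq.2 = φ₁ pq.1 then (1:K) else 0) h
    simp only [isotonianMap, map_sub, map_pow, map_mul, aeval_X, map_prod, map_zero] at h2
    simp only [aeval_X, if_pos rfl, Finset.prod_const, one_pow] at h2
    simp only [if_true, one_pow] at h2
    have h3 : (∏ x : P, if ψ₁ x = φ₁ x then (1:K) else 0) *
        (∏ x : P, if ψ₂ x = φ₁ x then (1:K) else 0) = 1 := (sub_eq_zero.mp h2).symm
    have h4 : (∏ x : P, if ψ₁ x = φ₁ x then (1:K) else 0) ≠ 0 := by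
      intro hz; rw [hz, zero_mul] at h3; exact one_ne_zero h3.symm
    have h5 : (∏ x : P, if ψ₂ x = φ₁ x then (1:K) else 0) ≠ 0 := by
      intro hz; rw [hz, mul_zero] at h3; exact one_ne_zero h3.symm
    constructor
    · ext p
      have := Finset.prod_ne_zero_iff.mp h4 p (Finset.mem_univ p)
      by_contra hc
      simp [hc] at this
    · ext p
      have := Finset.prod_ne_zero_iff.mp h5 p (Finset.mem_univ p)
      by_contra hc
      simp [hc] at this
  refine ⟨part1, ?_⟩
  rintro f hf ⟨u, v, hu2, hv2, rfl⟩ hne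
  obtain ⟨a, b, hab⟩ := aux_sum_eq_two_exists u hu2
  obtain ⟨c, d, hcd⟩ := aux_sum_eq_two_exists v hv2
  by_cases h1 : a = b
  · exfalso
    subst h1
    have hu' : monomial u (1:K) = X a ^ 2 := by
      rw [hab, aux_monomial_pair, sq]
    have hmem : ((X a) ^ 2 - X c * X d : MvPolynomial (P →o Q) K) ∈ isotonianIdeal K P Q := by
      rw [← hu', ← aux_monomial_pair (K := K) c d, ← hcd]
      exact hf
    obtain ⟨hc, hd⟩ := part1 a c d hmem
    subst hc; subst hd
    have huv : u = v := hab.trans hcd.symm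
    rw [huv] at hne
    exact hne (sub_self _)
  · by_cases h2 : c = d
    · exfalso
      subst h2
      have hv' : monomial v (1:K) = X c ^ 2 := by
        rw [hcd, aux_monomial_pair, sq]
      have hmem : ((X c) ^ 2 - X a * X b : MvPolynomial (P →o Q) K) ∈ isotonianIdeal K P Q := by
        have := (isotonianIdeal K P Q).neg_mem hf
        rw [neg_sub] at this
        rw [← hv', ← aux_monomial_pair (K := K) a b, ← hab]
        exact this
      obtain ⟨hc, hd⟩ := part1 c a b hmem
      exact h1 (hc.trans hd.symm)
    · refine ⟨u, v, ?_, ?_, rfl⟩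
      · intro i
        rw [hab]
        simp only [Finsupp.add_apply, Finsupp.single_apply]
        split_ifs with hA hB
        · exact absurd (hA.trans hB.symm) h1
        all_goals omega
      · intro i
        rw [hcd]
        simp only [Finsupp.add_apply, Finsupp.single_apply]
        split_ifs with hA hB
        · exact absurd (hA.trans hB.symm) h2
        all_goals omega
end

section
/- Let P be a rooted finite poset and Q any finite poset, and K a field. Then the ideal J_{P,Q} is generated by squarefree binomials, i.e. J_{P,Q} equals the ideal of T generated by the squarefree binomials it contains. -/
/-!
A monomial of `T` is a multiset `A` of isotone maps, and `Φ(t^A) = Φ(t^B)` says that `A` and `B`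
take the same multiset of values at every point of `P`. As the kernel of a monomial map is spanned
by such binomials, it suffices to connect any two such multisets by squarefree moves: replacing a
sub-multiset without repetitions by another one with the same values at every point.

This is done by induction on `|P|`. Let `p` be a maximal element. As `P` is rooted, the elements
below `p` form a chain with a largest element `r`, so an isotone map on `P ∖ {p}` extends to `P` by
any value above its value at `r`. Hence a move on `P ∖ {p}` lifts to `P`: pair the maps of both
sides by their values at `r` and give each new map the value at `p` of its partner. This reduces
the claim to `A`, `B` with the same restrictions to `P ∖ {p}` and the same values at `p`. For those,
the alternating walk (an element of `A`, an element of `B` with the same value at `p`, an element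
of `A` with the same restriction, …) closes up into a squarefree move after which `A` and `B` share
an element.
-/

open MvPolynomial

open Function Relation

theorem Function.exists_mem_periodicPts {α : Type*} [Finite α] [Nonempty α] (f : α → α) :
    ∃ x, x ∈ periodicPts f := by
  obtain ⟨x⟩ := ‹Nonempty α›
  obtain ⟨m, n, hmn, h⟩ := Finite.exists_ne_map_eq_of_infinite fun n : ℕ => f^[n] x
  wlog hlt : m < n generalizing m n
  · exact this n m hmn.symm h.symm (by omega)
  refine ⟨f^[m] x, n - m, by omega, ?_⟩
  change f^[n - m] (f^[m] x) = f^[m] x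
  rw [← iterate_add_apply, Nat.sub_add_cancel hlt.le]
  exact h.symm

theorem Function.map_toMultiset_periodicOrbit {α : Type*} {f : α → α} {x : α}
    (hx : x ∈ periodicPts f) :
    (periodicOrbit f x).toMultiset.map f = (periodicOrbit f x).toMultiset := by
  conv_rhs => rw [← periodicOrbit_apply_eq hx]
  simp only [periodicOrbit_def, Cycle.coe_toMultiset, Multiset.map_coe, List.map_map,
    minimalPeriod_apply hx]
  congr 2
  funext n
  exact (iterate_succ_apply' f n x).symm.trans (iterate_succ_apply f n x)

/- Regard each element `a` as an edge joining `r a` and `t a`. Every vertex has the same degree in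
`A` as in `B`, so a walk alternating between `A`-edges and `B`-edges closes up; it is traced by a
periodic orbit of the map `σ` below on the `r`-values. -/
theorem Multiset.exists_cycle_of_map_eq_map {α β γ : Type*} {r : α → β} {t : α → γ}
    {A B : Multiset α} (hr : A.map r = B.map r) (ht : A.map t = B.map t) (hA : A ≠ 0) :
    ∃ F G : Multiset α, F ≠ 0 ∧ F ≤ A ∧ G ≤ B ∧ (F.map r).Nodup ∧
      F.map r = G.map r ∧ F.map t = G.map t := by
  classical
  choose a haA har using fun b : {b // b ∈ A.map r} => mem_map.mp b.2
  choose f hfB hft using fun b : {b // b ∈ A.map r} =>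
    mem_map.mp (ht ▸ mem_map_of_mem t (haA b))
  let σ (b : {b // b ∈ A.map r}) : {b // b ∈ A.map r} :=
    ⟨r (f b), hr ▸ mem_map_of_mem r (hfB b)⟩
  obtain ⟨a₀, ha₀⟩ := exists_mem_of_ne_zero hA
  have : Nonempty {b // b ∈ A.map r} := ⟨⟨r a₀, mem_map_of_mem r ha₀⟩⟩
  obtain ⟨x, hx⟩ := exists_mem_periodicPts σ
  set M := (periodicOrbit σ x).toMultiset
  have hM : M.map σ = M := map_toMultiset_periodicOrbit hx
  have hFr : (M.map a).map r = M.map Subtype.val := by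
    rw [map_map]
    exact map_congr rfl fun b _ => har b
  have hGr : (M.map f).map r = M.map Subtype.val := by
    conv_rhs => rw [← hM, map_map]
    rw [map_map]
    rfl
  have hnd : (M.map Subtype.val).Nodup :=
    (Cycle.nodup_coe_iff.mp nodup_periodicOrbit).map Subtype.val_injective
  refine ⟨M.map a, M.map f, ?_, ?_, ?_, hFr ▸ hnd, hFr.trans hGr.symm, ?_⟩
  · simpa [M, Cycle.toMultiset_eq_nil] using hx
  · refine (le_iff_subset (hFr ▸ hnd).of_map).mpr fun _ h => ?_
    obtain ⟨b, -, rfl⟩ := mem_map.mp h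
    exact haA b
  · refine (le_iff_subset (hGr ▸ hnd).of_map).mpr fun _ h => ?_
    obtain ⟨b, -, rfl⟩ := mem_map.mp h
    exact hfB b
  · rw [map_map, map_map]
    exact map_congr rfl fun b _ => (hft b).symm

theorem Multiset.exists_eq_add_of_map_eq_add {α β : Type*} {f : α → β} {s : Multiset α}
    {t₁ t₂ : Multiset β} (h : s.map f = t₁ + t₂) :
    ∃ s₁ s₂, s = s₁ + s₂ ∧ s₁.map f = t₁ ∧ s₂.map f = t₂ := by
  obtain ⟨s₁, s₂, h₁, h₂, rfl⟩ := rel_add_right.mp (rel_map_left.mp (rel_eq.mpr h))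
  exact ⟨s₁, s₂, rfl, rel_eq.mp (rel_map_left.mpr h₁), rel_eq.mp (rel_map_left.mpr h₂)⟩

theorem exists_isGreatest_Iio {P : Type*} [PartialOrder P] [Finite P]
    (hroot : ∀ a b c : P, a ≤ c → b ≤ c → a ≤ b ∨ b ≤ a) {a p : P} (h : a < p) :
    ∃ r, IsGreatest (Set.Iio p) r := by
  obtain ⟨r, hr⟩ := (Set.toFinite (Set.Iio p)).exists_maximal ⟨a, h⟩
  refine ⟨r, hr.1, fun z hz => ?_⟩
  rcases hroot z r p hz.le hr.1.le with hzr | hrz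
  exacts [hzr, hr.2 hz hrz]

section SquarefreeMove

variable {P Q : Type*} [Preorder P] [Preorder Q]

/- The move from `C + F` to `C + G` corresponds to the squarefree binomial `t^F - t^G` of
`J_{P,Q}`, multiplied by `t^C`. -/
def SquarefreeMove (A B : Multiset (P →o Q)) : Prop :=
  ∃ C F G : Multiset (P →o Q), F.Nodup ∧ G.Nodup ∧
    (∀ p, F.map (· p) = G.map (· p)) ∧ A = C + F ∧ B = C + G

theorem SquarefreeMove.add_left {A B : Multiset (P →o Q)} (h : SquarefreeMove A B)
    (D : Multiset (P →o Q)) : SquarefreeMove (D + A) (D + B) := by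
  obtain ⟨C, F, G, hF, hG, hFG, rfl, rfl⟩ := h
  exact ⟨D + C, F, G, hF, hG, hFG, (add_assoc ..).symm, (add_assoc ..).symm⟩

theorem SquarefreeMove.map_eval_eq {A B : Multiset (P →o Q)} (h : SquarefreeMove A B) (p : P) :
    A.map (· p) = B.map (· p) := by
  obtain ⟨C, F, G, -, -, hFG, rfl, rfl⟩ := h
  rw [Multiset.map_add, Multiset.map_add, hFG]

theorem reflTransGen_squarefreeMove_add_left {A B : Multiset (P →o Q)}
    (h : ReflTransGen SquarefreeMove A B) (D : Multiset (P →o Q)) :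
    ReflTransGen SquarefreeMove (D + A) (D + B) :=
  h.lift (D + ·) fun _ _ hmove => hmove.add_left D

theorem map_eval_eq_of_reflTransGen_squarefreeMove {A B : Multiset (P →o Q)}
    (h : ReflTransGen SquarefreeMove A B) (p : P) : A.map (· p) = B.map (· p) := by
  induction h with
  | refl => rfl
  | tail _ hmove ih => exact ih.trans (hmove.map_eval_eq p)

end SquarefreeMove

section RestrictCompl

variable {P Q : Type*} [PartialOrder P] [Preorder Q]

def restrictCompl (p : P) (φ : P →o Q) : {x // x ≠ p} →o Q :=
  φ.comp (OrderHom.Subtype.val _)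

theorem map_eval_map_restrictCompl (p : P) (A : Multiset (P →o Q)) (x : {x // x ≠ p}) :
    (A.map (restrictCompl p)).map (· x) = A.map (· x.1) := by
  rw [Multiset.map_map]
  rfl

theorem map_eval_eq_of_restrictCompl {p : P} {A B : Multiset (P →o Q)}
    (hres : ∀ x : {x // x ≠ p},
      (A.map (restrictCompl p)).map (· x) = (B.map (restrictCompl p)).map (· x))
    (hp : A.map (· p) = B.map (· p)) (x : P) : A.map (· x) = B.map (· x) := by
  by_cases hx : x = p
  · exact hx ▸ hp
  · simpa only [map_eval_map_restrictCompl] using hres ⟨x, hx⟩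

variable {p r : P}

theorem exists_restrictCompl_eq (hp : IsMax p) (hr : IsGreatest (Set.Iio p) r)
    (g : {x // x ≠ p} →o Q) {q : Q} (hq : g ⟨r, hr.1.ne⟩ ≤ q) :
    ∃ φ : P →o Q, restrictCompl p φ = g ∧ φ p = q := by
  classical
  refine ⟨⟨fun x => if hx : x = p then q else g ⟨x, hx⟩, fun x y hxy => ?_⟩, ?_, by simp⟩
  · by_cases hx : x = p
    · have hy : y = p := le_antisymm (hp (hx ▸ hxy)) (hx ▸ hxy)
      simp [hx, hy]
    by_cases hy : y = p
    · have hxr : (⟨x, hx⟩ : {x // x ≠ p}) ≤ ⟨r, hr.1.ne⟩ :=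
        hr.2 (lt_of_le_of_ne (hy ▸ hxy) hx)
      simpa [hx, hy] using (g.mono hxr).trans hq
    · simpa [hx, hy] using g.mono (show (⟨x, hx⟩ : {x // x ≠ p}) ≤ ⟨y, hy⟩ from hxy)
  · ext x
    simp [restrictCompl, x.2]

theorem exists_lift_of_rel (hp : IsMax p) (hr : IsGreatest (Set.Iio p) r)
    {F : Multiset (P →o Q)} {G : Multiset ({x // x ≠ p} →o Q)}
    (h : Multiset.Rel (fun φ g => φ r = g ⟨r, hr.1.ne⟩) F G) :
    ∃ G' : Multiset (P →o Q),
      G'.map (restrictCompl p) = G ∧ G'.map (· p) = F.map (· p) := by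
  induction h with
  | zero => exact ⟨0, rfl, rfl⟩
  | @cons φ g F G hφg _ ih =>
    obtain ⟨G', hG'res, hG'p⟩ := ih
    obtain ⟨ψ, hψres, hψp⟩ := exists_restrictCompl_eq hp hr g (hφg ▸ φ.mono hr.1.le)
    exact ⟨ψ ::ₘ G', by simp [hG'res, hψres], by simp [hG'p, hψp]⟩

theorem SquarefreeMove.exists_lift (hp : IsMax p) (hr : IsGreatest (Set.Iio p) r)
    {C D : Multiset ({x // x ≠ p} →o Q)} (h : SquarefreeMove C D) {A : Multiset (P →o Q)}
    (hA : A.map (restrictCompl p) = C) :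
    ∃ A', SquarefreeMove A A' ∧ A'.map (restrictCompl p) = D := by
  obtain ⟨C, F, G, hF, hG, hFG, rfl, rfl⟩ := h
  obtain ⟨A, F', rfl, hA, hF'⟩ := Multiset.exists_eq_add_of_map_eq_add hA
  have hrel : Multiset.Rel (fun φ g => φ r = g ⟨r, hr.1.ne⟩) F' G := by
    have hFGr := hFG ⟨r, hr.1.ne⟩
    rw [← hF', map_eval_map_restrictCompl] at hFGr
    exact Multiset.rel_map.mp (Multiset.rel_eq.mpr hFGr)
  obtain ⟨G', hG'res, hG'p⟩ := exists_lift_of_rel hp hr hrel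
  refine ⟨A + G', ⟨A, F', G', (hF' ▸ hF).of_map _, (hG'res ▸ hG).of_map _,
    map_eval_eq_of_restrictCompl (by rw [hF', hG'res]; exact hFG) hG'p.symm, rfl, rfl⟩, ?_⟩
  rw [Multiset.map_add, hA, hG'res]

theorem exists_lift_of_reflTransGen (hp : IsMax p) (hr : IsGreatest (Set.Iio p) r)
    {C D : Multiset ({x // x ≠ p} →o Q)} (h : ReflTransGen SquarefreeMove C D)
    {A : Multiset (P →o Q)} (hA : A.map (restrictCompl p) = C) :
    ∃ A', ReflTransGen SquarefreeMove A A' ∧ A'.map (restrictCompl p) = D := by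
  induction h with
  | refl => exact ⟨A, .refl, hA⟩
  | tail _ hmove ih =>
    obtain ⟨A₁, hAA₁, hA₁⟩ := ih
    obtain ⟨A₂, hA₁A₂, hA₂⟩ := hmove.exists_lift hp hr hA₁
    exact ⟨A₂, hAA₁.tail hA₁A₂, hA₂⟩

theorem reflTransGen_of_map_restrictCompl_eq (p : P) {A B : Multiset (P →o Q)}
    (hres : A.map (restrictCompl p) = B.map (restrictCompl p))
    (htop : A.map (· p) = B.map (· p)) : ReflTransGen SquarefreeMove A B := by
  induction hn : Multiset.card A using Nat.strong_induction_on generalizing A B with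
  | _ n ih =>
  rcases eq_or_ne A 0 with rfl | hA
  · rw [Multiset.map_zero, eq_comm, Multiset.map_eq_zero] at hres
    exact hres ▸ .refl
  obtain ⟨F, G, hF0, hFA, hGB, hFnd, hFGres, hFGtop⟩ :=
    Multiset.exists_cycle_of_map_eq_map hres htop hA
  obtain ⟨A', rfl⟩ := Multiset.le_iff_exists_add.mp hFA
  obtain ⟨B', rfl⟩ := Multiset.le_iff_exists_add.mp hGB
  have hmove : SquarefreeMove (F + A') (G + A') :=
    ⟨A', F, G, hFnd.of_map _, (hFGres ▸ hFnd).of_map _,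
      map_eval_eq_of_restrictCompl (fun _ => by rw [hFGres]) hFGtop, add_comm .., add_comm ..⟩
  have hrest : ReflTransGen SquarefreeMove A' B' := by
    refine ih _ ?_ ?_ ?_ rfl
    · rw [← hn, Multiset.card_add]
      have := Multiset.card_pos.mpr hF0
      omega
    · rwa [Multiset.map_add, Multiset.map_add, hFGres, add_right_inj] at hres
    · rwa [Multiset.map_add, Multiset.map_add, hFGtop, add_right_inj] at htop
  exact .head hmove (reflTransGen_squarefreeMove_add_left hrest G)

end RestrictCompl

theorem reflTransGen_squarefreeMove_of_map_eval_eq {P Q : Type*} [PartialOrder P] [Finite P]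
    [Preorder Q] (hmin : ∃ p₀ : P, ∀ x : P, p₀ ≤ x)
    (hroot : ∀ a b c : P, a ≤ c → b ≤ c → a ≤ b ∨ b ≤ a) {A B : Multiset (P →o Q)}
    (hAB : ∀ p, A.map (· p) = B.map (· p)) : ReflTransGen SquarefreeMove A B := by
  induction hn : Nat.card P using Nat.strong_induction_on generalizing P with
  | _ n ih =>
  obtain ⟨p₀, hp₀⟩ := hmin
  obtain ⟨p, -, hpmax⟩ := Set.finite_univ.exists_maximal ⟨p₀, Set.mem_univ p₀⟩
  have hp : IsMax p := fun y hy => hpmax trivial hy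
  rcases (hp₀ p).lt_or_eq with hlt | rfl
  · obtain ⟨r, hr⟩ := exists_isGreatest_Iio hroot hlt
    have hsub : ReflTransGen SquarefreeMove (A.map (restrictCompl p)) (B.map (restrictCompl p)) :=
      ih _ (hn ▸ Finite.card_subtype_lt (not_not.mpr rfl)) (P := {x // x ≠ p})
        ⟨⟨p₀, hlt.ne⟩, fun x => hp₀ x⟩ (fun a b c => hroot a b c)
        (fun x => by simpa only [map_eval_map_restrictCompl] using hAB x) rfl
    obtain ⟨A', hAA', hA'⟩ := exists_lift_of_reflTransGen hp hr hsub rfl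
    exact hAA'.trans (reflTransGen_of_map_restrictCompl_eq p hA'
      ((map_eval_eq_of_reflTransGen_squarefreeMove hAA' p).symm.trans (hAB p)))
  · have hinj : Injective fun φ : P →o Q => φ p₀ := fun φ ψ h =>
      OrderHom.ext _ _ (funext fun x => le_antisymm (hp (hp₀ x)) (hp₀ x) ▸ h)
    rw [Multiset.map_injective hinj (hAB p₀)]

section KernelOfMonomialMap

variable {σ τ K : Type*} [CommRing K] {Φ : MvPolynomial σ K →ₐ[K] MvPolynomial τ K}
  {e : (σ →₀ ℕ) → τ →₀ ℕ}

theorem exists_mem_support_ne_of_mem_ker (he : ∀ u, Φ (monomial u 1) = monomial (e u) 1)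
    {f : MvPolynomial σ K} (hf : f ∈ RingHom.ker Φ) {u : σ →₀ ℕ} (hu : u ∈ f.support) :
    ∃ v ∈ f.support, v ≠ u ∧ e v = e u := by
  classical
  by_contra! h
  have hΦ : Φ f = ∑ v ∈ f.support, monomial (e v) (coeff v f) := by
    conv_lhs => rw [f.as_sum]
    rw [map_sum]
    refine Finset.sum_congr rfl fun v _ => ?_
    rw [← mul_one (coeff v f), ← smul_eq_mul, ← smul_monomial, map_smul, he, smul_monomial]
  have hcoeff := congrArg (coeff (e u)) hΦ
  rw [RingHom.mem_ker.mp hf, coeff_zero, coeff_sum, Finset.sum_eq_single u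
    (fun v hv hvu => by rw [coeff_monomial, if_neg (h v hv hvu)]) (fun h' => absurd hu h'),
    coeff_monomial, if_pos rfl] at hcoeff
  exact mem_support_iff.mp hu hcoeff.symm

theorem ker_le_of_monomial_sub_mem (he : ∀ u, Φ (monomial u 1) = monomial (e u) 1)
    {I : Ideal (MvPolynomial σ K)}
    (hI : ∀ u v, e u = e v → monomial u (1 : K) - monomial v 1 ∈ I) :
    RingHom.ker Φ ≤ I := by
  classical
  intro f hf
  induction hn : f.support.card using Nat.strong_induction_on generalizing f with
  | _ n ih =>
  rcases f.support.eq_empty_or_nonempty with h | ⟨u, hu⟩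
  · rw [support_eq_empty.mp h]
    exact I.zero_mem
  obtain ⟨v, hv, hvu, hev⟩ := exists_mem_support_ne_of_mem_ker he hf hu
  have hb : monomial u (1 : K) - monomial v 1 ∈ RingHom.ker Φ := by
    rw [RingHom.mem_ker, map_sub, he, he, hev, sub_self]
  set g := f - C (coeff u f) * (monomial u 1 - monomial v 1)
  have hg : g.support ⊆ f.support.erase u := by
    intro w hw
    rw [mem_support_iff] at hv hw
    simp only [g, coeff_sub, coeff_C_mul, coeff_monomial] at hw
    rw [Finset.mem_erase, mem_support_iff]
    grind
  have hgI : g ∈ I :=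
    ih _ (hn ▸ (Finset.card_le_card hg).trans_lt (Finset.card_erase_lt_of_mem hu))
      (sub_mem hf (Ideal.mul_mem_left _ _ hb)) rfl
  simpa [g] using add_mem hgI (I.mul_mem_left (C (coeff u f)) (hI u v hev.symm))

end KernelOfMonomialMap

section IsotonianExponent

variable {P Q : Type*} [Preorder P] [Fintype P] [Preorder Q]

noncomputable def isotonianExponent (u : (P →o Q) →₀ ℕ) : P × Q →₀ ℕ :=
  u.sum fun φ n => n • ∑ p, Finsupp.single (p, φ p) 1

theorem isotonianExponent_apply (u : (P →o Q) →₀ ℕ) (p : P) (q : Q) :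
    isotonianExponent u (p, q) = u.mapDomain (· p) q := by
  classical
  rw [Finsupp.mapDomain, isotonianExponent, Finsupp.sum_apply, Finsupp.sum_apply]
  refine Finsupp.sum_congr fun φ _ => ?_
  rw [Finsupp.smul_apply, Finsupp.finsetSum_apply, Fintype.sum_eq_single p
    fun x hx => Finsupp.single_eq_of_ne (by simp [Ne.symm hx])]
  by_cases h : φ p = q <;> simp [h]

theorem isotonianExponent_eq_iff {u v : (P →o Q) →₀ ℕ} :
    isotonianExponent u = isotonianExponent v ↔
      ∀ p, u.toMultiset.map (· p) = v.toMultiset.map (· p) := by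
  classical
  simp only [Finsupp.ext_iff, Prod.forall, isotonianExponent_apply, Multiset.ext,
    Finsupp.toMultiset_map, Finsupp.count_toMultiset]

end IsotonianExponent

theorem isotonianMap_monomial (K P Q : Type) [Field K] [PartialOrder P] [Fintype P]
    [PartialOrder Q] [Fintype Q] (u : (P →o Q) →₀ ℕ) :
    isotonianMap K P Q (monomial u 1) = monomial (isotonianExponent u) 1 := by
  rw [isotonianMap, aeval_monomial, map_one, one_mul, isotonianExponent,
    monomial_finsupp_sum_index, map_one, one_mul]
  refine Finsupp.prod_congr fun φ _ => ?_
  rw [← one_pow (M := K) (u φ), ← monomial_pow, monomial_sum_one]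
  rfl

theorem isSquarefreeBinomial_of_nodup {σ K : Type} [Field K] [DecidableEq σ] {F G : Multiset σ}
    (hF : F.Nodup) (hG : G.Nodup) :
    IsSquarefreeBinomial (monomial F.toFinsupp (1 : K) - monomial G.toFinsupp 1) :=
  ⟨_, _, Multiset.nodup_iff_count_le_one.mp hF, Multiset.nodup_iff_count_le_one.mp hG, rfl⟩

section SquarefreeSpan

variable {K P Q : Type} [Field K] [PartialOrder P] [Fintype P] [PartialOrder Q] [Fintype Q]
  [DecidableEq (P →o Q)]

theorem monomial_sub_mem_isotonianIdeal {F G : Multiset (P →o Q)}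
    (hFG : ∀ p, F.map (· p) = G.map (· p)) :
    monomial F.toFinsupp (1 : K) - monomial G.toFinsupp 1 ∈ isotonianIdeal K P Q := by
  rw [isotonianIdeal, RingHom.mem_ker, map_sub, isotonianMap_monomial, isotonianMap_monomial,
    (isotonianExponent_eq_iff (v := G.toFinsupp)).mpr
      (by simpa only [Multiset.toFinsupp_toMultiset] using hFG),
    sub_self]

theorem monomial_sub_mem_span_of_reflTransGen {A B : Multiset (P →o Q)}
    (h : ReflTransGen SquarefreeMove A B) :
    monomial A.toFinsupp (1 : K) - monomial B.toFinsupp 1 ∈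
      Ideal.span {f | f ∈ isotonianIdeal K P Q ∧ IsSquarefreeBinomial f} := by
  induction h with
  | refl => rw [sub_self]; exact zero_mem _
  | tail _ hmove ih =>
    obtain ⟨C, F, G, hF, hG, hFG, rfl, rfl⟩ := hmove
    have hfactor : monomial (C + F).toFinsupp (1 : K) - monomial (C + G).toFinsupp 1 =
        monomial C.toFinsupp 1 * (monomial F.toFinsupp 1 - monomial G.toFinsupp 1) := by
      rw [mul_sub, monomial_mul, monomial_mul, one_mul, map_add, map_add]
    rw [← sub_add_sub_cancel, hfactor]
    exact add_mem ih (Ideal.mul_mem_left _ _ (Ideal.subset_span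
      ⟨monomial_sub_mem_isotonianIdeal hFG, isSquarefreeBinomial_of_nodup hF hG⟩))

end SquarefreeSpan

/-- If `P` is rooted, then `J_{P,Q}` is generated by the squarefree binomials it contains. -/
theorem statement6 (K P Q : Type) [Field K] [PartialOrder P] [Fintype P]
    [PartialOrder Q] [Fintype Q]
    (hmin : ∃ p₀ : P, ∀ x : P, p₀ ≤ x)
    (hroot : ∀ a b c : P, a ≤ c → b ≤ c → a ≤ b ∨ b ≤ a) :
    isotonianIdeal K P Q =
      Ideal.span {f | f ∈ isotonianIdeal K P Q ∧ IsSquarefreeBinomial f} := by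
  classical
  refine le_antisymm (ker_le_of_monomial_sub_mem (isotonianMap_monomial K P Q) fun u v huv => ?_)
    (Ideal.span_le.mpr fun f hf => hf.1)
  have := monomial_sub_mem_span_of_reflTransGen (K := K)
    (reflTransGen_squarefreeMove_of_map_eval_eq hmin hroot (isotonianExponent_eq_iff.mp huv))
  simpa only [Finsupp.toMultiset_toFinsupp] using this
end

section
/- Let P₁, P₂ and Q be finite posets and K a field. If J_{P₁,Q} is generated by quadratic binomials and J_{P₂,Q} is generated by quadratic binomials, then J_{P₁+P₂,Q} is generated by quadratic binomials, where P₁ + P₂ is the disjoint sum of P₁ and P₂. -/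
open MvPolynomial

/-!
Write `t^a` for the monomial with exponent `a` in the variables `t_φ`. Since `Φ(t_φ)` is the
monomial with exponent `isotonianWeight φ = ∑ p, e_(p, φ p)`, `J_{P,Q}` is the kernel of a monomial
map. Such a kernel is spanned by the binomials `t^a - t^b` with `a` and `b` of equal weight, and
`t^a - t^b` lies in the ideal generated by the quadratic binomials of the kernel exactly when `a`
and `b` are joined by moves exchanging two variables for two others of the same total weight.
So `J_{P,Q}` is generated by quadratic binomials iff every fibre of the weight is connected by
such moves.

An isotone map on `P₁ + P₂` is a pair of isotone maps on `P₁` and `P₂`, and its weight is the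
pair of their weights. Given two multisets of pairs of equal weight, first connect their first
coordinates by moves of `P₁`, lifted to pairs, then their second coordinates by moves of `P₂`.
The two multisets then have the same marginals, and moves that swap the second coordinates of
two pairs join them.
-/

open Relation

section QuadMove

variable {σ σ' M N : Type*} [AddCommMonoid M] [AddCommMonoid N]

def QuadMove (w : σ → M) (m m' : Multiset σ) : Prop :=
  ∃ C x y x' y', w x + w y = w x' + w y' ∧ m = x ::ₘ y ::ₘ C ∧ m' = x' ::ₘ y' ::ₘ C

def FibersConnected (w : σ → M) : Prop :=
  ∀ m m' : Multiset σ, (m.map w).sum = (m'.map w).sum → ReflTransGen (QuadMove w) m m'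

variable {w : σ → M} {m m' : Multiset σ}

theorem QuadMove.symm (h : QuadMove w m m') : QuadMove w m' m := by
  obtain ⟨C, x, y, x', y', hw, rfl, rfl⟩ := h
  exact ⟨C, x', y', x, y, hw.symm, rfl, rfl⟩

instance : Std.Symm (QuadMove w) := ⟨fun _ _ => QuadMove.symm⟩

theorem QuadMove.add_left (n : Multiset σ) (h : QuadMove w m m') :
    QuadMove w (n + m) (n + m') := by
  obtain ⟨C, x, y, x', y', hw, rfl, rfl⟩ := h
  exact ⟨n + C, x, y, x', y', hw, by simp, by simp⟩

theorem QuadMove.map {w' : σ' → N} (f : σ → σ') (g : M →+ N) (hw : ∀ s, w' (f s) = g (w s))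
    (h : QuadMove w m m') : QuadMove w' (m.map f) (m'.map f) := by
  obtain ⟨C, x, y, x', y', hxy, rfl, rfl⟩ := h
  refine ⟨C.map f, f x, f y, f x', f y', ?_, by simp, by simp⟩
  simp only [hw, ← map_add, hxy]

theorem QuadMove.reflTransGen_add_left (n : Multiset σ) (h : ReflTransGen (QuadMove w) m m') :
    ReflTransGen (QuadMove w) (n + m) (n + m') :=
  h.lift (n + ·) fun _ _ => QuadMove.add_left n

theorem QuadMove.reflTransGen_cons (z : σ) (h : ReflTransGen (QuadMove w) m m') :
    ReflTransGen (QuadMove w) (z ::ₘ m) (z ::ₘ m') := by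
  simpa using QuadMove.reflTransGen_add_left {z} h

variable (w) in
def quadMoveCon : AddCon (Multiset σ) where
  r := ReflTransGen (QuadMove w)
  iseqv := ⟨fun _ => .refl, fun h => Std.Symm.symm _ _ h, .trans⟩
  add' {a b c d} hab hcd := by
    refine ReflTransGen.trans ?_ (QuadMove.reflTransGen_add_left b hcd)
    simpa only [add_comm _ c] using QuadMove.reflTransGen_add_left c hab

theorem FibersConnected.of_equiv_of_injective {w' : σ' → N} (h : FibersConnected w)
    (e : σ' ≃ σ) (g : M →+ N) (hg : Function.Injective g) (hw : ∀ s, w' s = g (w (e s))) :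
    FibersConnected w' := by
  intro m m' hm
  have hsum : ((m.map e).map w).sum = ((m'.map e).map w).sum := by
    apply hg
    simpa [map_multiset_sum, Multiset.map_map, hw] using hm
  have := (h _ _ hsum).lift (Multiset.map e.symm) fun _ _ =>
    QuadMove.map (w' := w') e.symm g fun s => by simp [hw]
  simpa [Function.onFun, Multiset.map_map, Function.comp_def] using this

end QuadMove

theorem Multiset.exists_eq_cons_of_map_eq_cons {α β : Type*} {f : α → β} {s : Multiset α}
    {b : β} {t : Multiset β} (h : s.map f = b ::ₘ t) :
    ∃ a s', s = a ::ₘ s' ∧ f a = b ∧ s'.map f = t := by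
  classical
  obtain ⟨a, ha, hab, hs⟩ := (Multiset.map_eq_cons f s t b).mpr h
  exact ⟨a, s.erase a, (Multiset.cons_erase ha).symm, hab, hs⟩

section Prod

variable {α β M N : Type*} [AddCommMonoid M] [AddCommMonoid N] {w₁ : α → M} {w₂ : β → N}

theorem reflTransGen_quadMove_prodMap_of_map_eq {S T : Multiset (α × β)}
    (h₁ : S.map Prod.fst = T.map Prod.fst) (h₂ : S.map Prod.snd = T.map Prod.snd) :
    ReflTransGen (QuadMove (Prod.map w₁ w₂)) S T := by
  induction S using Multiset.induction_on generalizing T with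
  | empty =>
    obtain rfl : T = 0 := by simpa [eq_comm] using h₁
    exact .refl
  | cons z S ih =>
    rw [Multiset.map_cons] at h₁ h₂
    obtain ⟨z₁, T₁, rfl, hz₁, hT₁⟩ := Multiset.exists_eq_cons_of_map_eq_cons h₁.symm
    rw [Multiset.map_cons] at h₂
    rcases Multiset.cons_eq_cons.mp h₂ with ⟨hz, hS⟩ | ⟨-, C, hS, hT₁C⟩
    · obtain rfl : z = z₁ := Prod.ext hz₁.symm hz
      exact QuadMove.reflTransGen_cons z (ih hT₁.symm hS)
    · obtain ⟨z₂, T₂, rfl, hz₂, hT₂⟩ := Multiset.exists_eq_cons_of_map_eq_cons hT₁C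
      -- `z₁ = (z.1, _)` and `z₂ = (_, z.2)`: swapping their second coordinates produces `z`
      have hswap : QuadMove (Prod.map w₁ w₂) (z ::ₘ (z₂.1, z₁.2) ::ₘ T₂) (z₁ ::ₘ z₂ ::ₘ T₂) :=
        ⟨T₂, z, (z₂.1, z₁.2), z₁, z₂, by ext <;> simp [hz₁, hz₂, add_comm], rfl, rfl⟩
      refine (QuadMove.reflTransGen_cons z (ih ?_ ?_)).tail hswap
      · simpa [hT₂] using hT₁.symm
      · simpa [hT₂] using hS

theorem exists_reflTransGen_quadMove_prodMap_map_fst {m m' : Multiset α}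
    (h : ReflTransGen (QuadMove w₁) m m') (S : Multiset (α × β)) (hS : S.map Prod.fst = m) :
    ∃ S', ReflTransGen (QuadMove (Prod.map w₁ w₂)) S S' ∧ S'.map Prod.fst = m' ∧
      S'.map Prod.snd = S.map Prod.snd := by
  induction h with
  | refl => exact ⟨S, .refl, hS, rfl⟩
  | tail _ hmove ih =>
    obtain ⟨S₁, hSS₁, hfst, hsnd⟩ := ih
    obtain ⟨C, x, y, x', y', hw, rfl, rfl⟩ := hmove
    obtain ⟨z₁, R₁, rfl, hz₁, hR₁⟩ := Multiset.exists_eq_cons_of_map_eq_cons hfst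
    obtain ⟨z₂, R₂, rfl, hz₂, hR₂⟩ := Multiset.exists_eq_cons_of_map_eq_cons hR₁
    refine ⟨(x', z₁.2) ::ₘ (y', z₂.2) ::ₘ R₂, hSS₁.tail ?_, by simp [hR₂], by simp [← hsnd]⟩
    exact ⟨R₂, z₁, z₂, (x', z₁.2), (y', z₂.2), by ext <;> simp [hz₁, hz₂, hw], rfl, rfl⟩

theorem exists_reflTransGen_quadMove_prodMap_map_snd {m m' : Multiset β}
    (h : ReflTransGen (QuadMove w₂) m m') (S : Multiset (α × β)) (hS : S.map Prod.snd = m) :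
    ∃ S', ReflTransGen (QuadMove (Prod.map w₁ w₂)) S S' ∧ S'.map Prod.snd = m' ∧
      S'.map Prod.fst = S.map Prod.fst := by
  obtain ⟨S', hSS', hfst, hsnd⟩ := exists_reflTransGen_quadMove_prodMap_map_fst (w₂ := w₁) h
    (S.map Prod.swap) (by simpa [Multiset.map_map, Function.comp_def] using hS)
  refine ⟨S'.map Prod.swap, ?_, by simpa [Multiset.map_map, Function.comp_def] using hfst,
    by simpa [Multiset.map_map, Function.comp_def] using hsnd⟩
  have := hSS'.lift (Multiset.map Prod.swap) fun _ _ =>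
    QuadMove.map (w' := Prod.map w₁ w₂) Prod.swap (AddEquiv.prodComm (M := N) (N := M))
      fun _ => rfl
  simpa [Function.onFun, Multiset.map_map, Function.comp_def] using this

theorem FibersConnected.prodMap (h₁ : FibersConnected w₁) (h₂ : FibersConnected w₂) :
    FibersConnected (Prod.map w₁ w₂) := by
  intro S T hST
  have hsum₁ : ((S.map Prod.fst).map w₁).sum = ((T.map Prod.fst).map w₁).sum := by
    simpa [map_multiset_sum, Multiset.map_map, Function.comp_def]
      using congrArg (AddMonoidHom.fst M N) hST
  have hsum₂ : ((S.map Prod.snd).map w₂).sum = ((T.map Prod.snd).map w₂).sum := by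
    simpa [map_multiset_sum, Multiset.map_map, Function.comp_def]
      using congrArg (AddMonoidHom.snd M N) hST
  obtain ⟨S₁, hSS₁, hfst₁, hsnd₁⟩ :=
    exists_reflTransGen_quadMove_prodMap_map_fst (w₂ := w₂) (h₁ _ _ hsum₁) S rfl
  obtain ⟨S₂, hS₁S₂, hsnd₂, hfst₂⟩ :=
    exists_reflTransGen_quadMove_prodMap_map_snd (w₁ := w₁) (h₂ _ _ (hsnd₁ ▸ hsum₂)) S₁ rfl
  exact hSS₁.trans <| hS₁S₂.trans <|
    reflTransGen_quadMove_prodMap_of_map_eq (hfst₂.trans hfst₁) hsnd₂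

end Prod

theorem Finsupp.degree_eq_two_iff {σ : Type*} {u : σ →₀ ℕ} :
    u.degree = 2 ↔ ∃ x y, u = single x 1 + single y 1 := by
  classical
  constructor
  · intro hu
    obtain ⟨x, y, hxy⟩ := Multiset.card_eq_two.mp ((card_toMultiset u).trans hu)
    refine ⟨x, y, ?_⟩
    rw [toMultiset_eq_iff.mp hxy, Multiset.insert_eq_cons, ← Multiset.singleton_add,
      Multiset.toFinsupp_add, Multiset.toFinsupp_singleton, Multiset.toFinsupp_singleton]
  · rintro ⟨x, y, rfl⟩
    simp

theorem Finsupp.weight_toFinsupp {σ M : Type*} [AddCommMonoid M] [DecidableEq σ] (w : σ → M)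
    (m : Multiset σ) : weight w (Multiset.toFinsupp m) = (m.map w).sum := by
  induction m using Multiset.induction_on with
  | empty => simp
  | cons x m ih => simp [← Multiset.singleton_add, ih, weight_single]

noncomputable def monomialMap (R : Type*) {σ τ : Type*} [CommSemiring R] (w : σ → τ →₀ ℕ) :
    MvPolynomial σ R →ₐ[R] MvPolynomial τ R :=
  aeval fun s => monomial (w s) 1

section MonomialMap

variable {R σ τ : Type*} [CommSemiring R]

theorem monomial_toFinsupp_cons [DecidableEq σ] (x : σ) (m : Multiset σ) (r : R) :
    monomial (Multiset.toFinsupp (x ::ₘ m)) r = X x * monomial (Multiset.toFinsupp m) r := by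
  rw [← Multiset.singleton_add, Multiset.toFinsupp_add, Multiset.toFinsupp_singleton,
    monomial_single_add, pow_one]

theorem monomialMap_monomial (w : σ → τ →₀ ℕ) (a : σ →₀ ℕ) (r : R) :
    monomialMap R w (monomial a r) = monomial (Finsupp.weight w a) r := by
  induction a using Finsupp.induction with
  | zero => simp [monomialMap]
  | single_add s n a _ _ ih =>
    rw [monomial_single_add, map_mul, ih, map_add, Finsupp.weight_single]
    simp [monomialMap, monomial_pow, monomial_mul]

end MonomialMap

theorem mem_span_of_mem_ker_monomialMap {R σ τ : Type*} [CommRing R] {w : σ → τ →₀ ℕ}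
    {p : MvPolynomial σ R} (hp : p ∈ RingHom.ker (monomialMap R w)) :
    p ∈ Submodule.span R
      {f | ∃ a b, Finsupp.weight w a = Finsupp.weight w b ∧ f = monomial a 1 - monomial b 1} := by
  -- `t^a ↦ t^(g (weight w a))` sends each monomial to a fixed monomial of its fibre; it factors
  -- through `monomialMap R w`, hence kills `p`
  let g := Function.invFun fun a : σ →₀ ℕ => Finsupp.weight w a
  have key : ∀ q : MvPolynomial σ R,
      q - AddMonoidAlgebra.mapDomain g (monomialMap R w q) ∈ Submodule.span R
        {f | ∃ a b, Finsupp.weight w a = Finsupp.weight w b ∧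
          f = monomial a 1 - monomial b 1} := by
    intro q
    induction q using MvPolynomial.induction_on' with
    | monomial a c =>
      have hg : ∀ b, AddMonoidAlgebra.mapDomain g (monomial b c) = monomial (g b) c := fun b => by
        simp only [← single_eq_monomial, AddMonoidAlgebra.mapDomain_single]
      have hc : ∀ b, (monomial b c : MvPolynomial σ R) = c • monomial b 1 := fun b => by
        rw [smul_monomial, smul_eq_mul, mul_one]
      rw [monomialMap_monomial, hg, hc, hc, ← smul_sub]
      exact Submodule.smul_mem _ _
        (Submodule.subset_span ⟨a, _, (Function.invFun_eq ⟨a, rfl⟩).symm, rfl⟩)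
    | add p q hp hq =>
      rw [map_add, AddMonoidAlgebra.mapDomain_add, add_sub_add_comm]
      exact Submodule.add_mem _ hp hq
  simpa [RingHom.mem_ker.mp hp, AddMonoidAlgebra.mapDomain_zero] using key p

section QuadraticBinomial

variable {K σ τ : Type} [Field K] {w : σ → τ →₀ ℕ}

theorem X_mul_X_eq_monomial (x y : σ) :
    (X x * X y : MvPolynomial σ K) = monomial (Finsupp.single x 1 + Finsupp.single y 1) 1 := by
  rw [X, X, monomial_mul, one_mul]

theorem isQuadraticBinomial_iff {f : MvPolynomial σ K} :
    IsQuadraticBinomial f ↔ ∃ x y x' y', f = X x * X y - X x' * X y' := by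
  constructor
  · rintro ⟨u, v, hu, hv, rfl⟩
    obtain ⟨x, y, rfl⟩ := Finsupp.degree_eq_two_iff.mp hu
    obtain ⟨x', y', rfl⟩ := Finsupp.degree_eq_two_iff.mp hv
    exact ⟨x, y, x', y', by rw [X_mul_X_eq_monomial, X_mul_X_eq_monomial]⟩
  · rintro ⟨x, y, x', y', rfl⟩
    exact ⟨_, _, Finsupp.degree_eq_two_iff.mpr ⟨x, y, rfl⟩,
      Finsupp.degree_eq_two_iff.mpr ⟨x', y', rfl⟩, by rw [X_mul_X_eq_monomial, X_mul_X_eq_monomial]⟩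

theorem X_mul_X_sub_X_mul_X_mem_ker_monomialMap_iff {x y x' y' : σ} :
    X x * X y - X x' * X y' ∈ RingHom.ker (monomialMap K w) ↔ w x + w y = w x' + w y' := by
  simp only [RingHom.mem_ker, map_sub, map_mul, monomialMap, aeval_X, monomial_mul, one_mul,
    sub_eq_zero, (monomial_left_injective (one_ne_zero (α := K))).eq_iff]

variable (K w) in
noncomputable abbrev quadraticBinomialIdeal : Ideal (MvPolynomial σ K) :=
  Ideal.span {f | f ∈ RingHom.ker (monomialMap K w) ∧ IsQuadraticBinomial f}

theorem monomial_sub_monomial_mem_quadraticBinomialIdeal [DecidableEq σ] {m m' : Multiset σ}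
    (h : ReflTransGen (QuadMove w) m m') :
    monomial (Multiset.toFinsupp m) 1 - monomial (Multiset.toFinsupp m') 1 ∈
      quadraticBinomialIdeal K w := by
  induction h with
  | refl => simp
  | tail _ hmove ih =>
    obtain ⟨C, x, y, x', y', hw, rfl, rfl⟩ := hmove
    refine (sub_add_sub_cancel _ _ _).subst (Ideal.add_mem _ ih ?_)
    have hquad : X x * X y - X x' * X y' ∈ quadraticBinomialIdeal K w :=
      Ideal.subset_span ⟨X_mul_X_sub_X_mul_X_mem_ker_monomialMap_iff.mpr hw,
        isQuadraticBinomial_iff.mpr ⟨x, y, x', y', rfl⟩⟩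
    convert Ideal.mul_mem_left _ (monomial (Multiset.toFinsupp C) 1) hquad using 1
    simp only [monomial_toFinsupp_cons]
    ring

theorem reflTransGen_quadMove_of_monomial_sub_monomial_mem {a b : σ →₀ ℕ}
    (h : monomial a 1 - monomial b 1 ∈ quadraticBinomialIdeal K w) :
    ReflTransGen (QuadMove w) a.toMultiset b.toMultiset := by
  -- the ring map `t^a ↦ [a]` to the algebra of the monoid of move-classes kills every generator
  let ψ : MvPolynomial σ K →+* AddMonoidAlgebra K (quadMoveCon w).Quotient :=
    AddMonoidAlgebra.mapDomainRingHom K ((quadMoveCon w).mk'.comp Finsupp.toMultiset)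
  have hψ : ∀ a : σ →₀ ℕ,
      ψ (monomial a 1) = AddMonoidAlgebra.single (a.toMultiset : (quadMoveCon w).Quotient) 1 := by
    intro a
    rw [← single_eq_monomial]
    simp [ψ]
  have hle : quadraticBinomialIdeal K w ≤ RingHom.ker ψ := by
    refine Ideal.span_le.mpr ?_
    rintro f ⟨hker, hquad⟩
    obtain ⟨x, y, x', y', rfl⟩ := isQuadraticBinomial_iff.mp hquad
    have hmove : QuadMove w (x ::ₘ y ::ₘ 0) (x' ::ₘ y' ::ₘ 0) :=
      ⟨0, x, y, x', y', X_mul_X_sub_X_mul_X_mem_ker_monomialMap_iff.mp hker, rfl, rfl⟩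
    rw [SetLike.mem_coe, RingHom.mem_ker, map_sub, X_mul_X_eq_monomial, X_mul_X_eq_monomial,
      hψ, hψ, sub_eq_zero]
    simpa using congrArg (AddMonoidAlgebra.single · (1 : K))
      ((quadMoveCon w).eq.mpr (.single hmove))
  have hab := RingHom.mem_ker.mp (hle h)
  rw [map_sub, hψ, hψ, sub_eq_zero] at hab
  exact (quadMoveCon w).eq.mp (AddMonoidAlgebra.single_left_injective one_ne_zero hab)

theorem ker_monomialMap_eq_span_quadraticBinomial_iff :
    RingHom.ker (monomialMap K w) =
        Ideal.span {f | f ∈ RingHom.ker (monomialMap K w) ∧ IsQuadraticBinomial f} ↔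
      FibersConnected w := by
  classical
  constructor
  · intro h m m' hmm'
    have hmem : monomial (Multiset.toFinsupp m) 1 - monomial (Multiset.toFinsupp m') 1 ∈
        RingHom.ker (monomialMap K w) := by
      rw [RingHom.mem_ker, map_sub, monomialMap_monomial, monomialMap_monomial,
        Finsupp.weight_toFinsupp, Finsupp.weight_toFinsupp, hmm', sub_self]
    rw [h] at hmem
    simpa using reflTransGen_quadMove_of_monomial_sub_monomial_mem hmem
  · intro h
    refine le_antisymm (fun p hp => ?_) (Ideal.span_le.mpr fun f hf => hf.1)
    refine (Submodule.span_le (p := (quadraticBinomialIdeal K w).restrictScalars K)).mpr ?_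
      (mem_span_of_mem_ker_monomialMap hp)
    rintro f ⟨a, b, hab, rfl⟩
    have hmoves := h a.toMultiset b.toMultiset (by simpa [← Finsupp.weight_toFinsupp] using hab)
    simpa using monomial_sub_monomial_mem_quadraticBinomialIdeal (K := K) hmoves

end QuadraticBinomial

noncomputable def isotonianWeight (P Q : Type) [Preorder P] [Preorder Q] [Fintype P]
    (φ : P →o Q) : P × Q →₀ ℕ :=
  ∑ p, Finsupp.single (p, φ p) 1

theorem isotonianMap_eq_monomialMap (K P Q : Type) [Field K] [PartialOrder P] [Fintype P]
    [PartialOrder Q] [Fintype Q] :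
    isotonianMap K P Q = monomialMap K (isotonianWeight P Q) := by
  unfold isotonianMap monomialMap isotonianWeight
  congr 1
  funext φ
  rw [monomial_sum_one]
  rfl

def OrderHom.sumEquiv (P₁ P₂ Q : Type*) [Preorder P₁] [Preorder P₂] [Preorder Q] :
    (P₁ ⊕ P₂ →o Q) ≃ (P₁ →o Q) × (P₂ →o Q) where
  toFun f := (⟨f ∘ Sum.inl, f.monotone.comp Sum.inl_mono⟩,
    ⟨f ∘ Sum.inr, f.monotone.comp Sum.inr_mono⟩)
  invFun g := ⟨Sum.elim g.1 g.2, by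
    rintro (a | a) (b | b) h <;>
      simp only [Sum.inl_le_inl_iff, Sum.inr_le_inr_iff, Sum.not_inl_le_inr,
        Sum.not_inr_le_inl] at h
    exacts [g.1.monotone h, g.2.monotone h]⟩
  left_inv f := by ext (a | a) <;> rfl
  right_inv g := rfl

theorem isotonianWeight_sum (P₁ P₂ Q : Type) [PartialOrder P₁] [Fintype P₁]
    [PartialOrder P₂] [Fintype P₂] [PartialOrder Q] (φ : P₁ ⊕ P₂ →o Q) :
    isotonianWeight (P₁ ⊕ P₂) Q φ =
      (Finsupp.sumFinsuppAddEquivProdFinsupp.symm.trans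
          (Finsupp.domCongr (Equiv.sumProdDistrib P₁ P₂ Q).symm))
        (Prod.map (isotonianWeight P₁ Q) (isotonianWeight P₂ Q) (OrderHom.sumEquiv P₁ P₂ Q φ)) := by
  classical
  ext ⟨p | p, q⟩ <;>
    simp [isotonianWeight, OrderHom.sumEquiv, Fintype.sum_sum_type, Finsupp.single_apply] <;> rfl

/-- If `J_{P₁,Q}` and `J_{P₂,Q}` are generated by quadratic binomials, then so is
`J_{P₁+P₂,Q}`, where `P₁ + P₂ = P₁ ⊕ P₂` is the disjoint sum of the two posets. -/
theorem statement10 (K P₁ P₂ Q : Type) [Field K] [PartialOrder P₁] [Fintype P₁]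
    [PartialOrder P₂] [Fintype P₂] [PartialOrder Q] [Fintype Q]
    (h1 : isotonianIdeal K P₁ Q =
      Ideal.span {f | f ∈ isotonianIdeal K P₁ Q ∧ IsQuadraticBinomial f})
    (h2 : isotonianIdeal K P₂ Q =
      Ideal.span {f | f ∈ isotonianIdeal K P₂ Q ∧ IsQuadraticBinomial f}) :
    isotonianIdeal K (P₁ ⊕ P₂) Q =
      Ideal.span {f | f ∈ isotonianIdeal K (P₁ ⊕ P₂) Q ∧ IsQuadraticBinomial f} := by
  simp only [isotonianIdeal, isotonianMap_eq_monomialMap,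
    ker_monomialMap_eq_span_quadraticBinomial_iff] at h1 h2 ⊢
  exact (h1.prodMap h2).of_equiv_of_injective (OrderHom.sumEquiv P₁ P₂ Q)
    (AddEquiv.toAddMonoidHom _) (AddEquiv.injective _) (isotonianWeight_sum P₁ P₂ Q)
end

section
/- Let Q be a finite poset and let q₁, q₂, …, q_{2m} be a poset cycle in Q of length 2m ≥ 6. If this poset cycle is not proper, then it admits a chord. -/
/-- `q 0, q 1, …, q (2*m-1)` is a poset cycle of length `2*m` in `Q` (0-based version of
`q₁ ≤ q₂ ≥ q₃ ≤ ⋯ ≤ q_{2m} ≥ q₁`): every even-indexed element is below both of its cyclic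
neighbors. -/
def IsPosetCycle {Q : Type} [PartialOrder Q] (m : ℕ) (q : ℕ → Q) : Prop :=
  ∀ i < m, q (2 * i) ≤ q (2 * i + 1) ∧ q (2 * i) ≤ q ((2 * i + 2 * m - 1) % (2 * m))

/-- The poset cycle `q 0, …, q (2*m-1)` has a chord: some even-indexed (0-based) element
is below an odd-indexed element which is not one of its two cyclic neighbors. -/
def HasChord {Q : Type} [PartialOrder Q] (m : ℕ) (q : ℕ → Q) : Prop :=
  ∃ i < m, ∃ j < m, j ≠ i ∧ 2 * j + 1 ≠ (2 * i + 2 * m - 1) % (2 * m) ∧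
    q (2 * i) ≤ q (2 * j + 1)

/-- The poset cycle `q 0, …, q (2*m-1)` is proper: its elements are pairwise distinct, the
even-indexed (0-based) elements are pairwise incomparable, and so are the odd-indexed ones. -/
def IsProperPosetCycle {Q : Type} [PartialOrder Q] (m : ℕ) (q : ℕ → Q) : Prop :=
  (∀ i < 2 * m, ∀ j < 2 * m, i ≠ j → q i ≠ q j) ∧
  (∀ i < m, ∀ j < m, i ≠ j → ¬ q (2 * i) ≤ q (2 * j)) ∧
  (∀ i < m, ∀ j < m, i ≠ j → ¬ q (2 * i + 1) ≤ q (2 * j + 1))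

private lemma pval (m i : ℕ) (hm : 1 ≤ m) (hi : i < m) :
    (i = 0 ∧ (i + m - 1) % m = m - 1) ∨ (1 ≤ i ∧ (i + m - 1) % m = i - 1) := by
  rcases Nat.eq_zero_or_pos i with h | h
  · left
    subst h
    simp [Nat.mod_eq_of_lt (show m - 1 < m by omega)]
  · right
    refine ⟨h, ?_⟩
    have he : i + m - 1 = (i - 1) + m := by omega
    rw [he, Nat.add_mod_right, Nat.mod_eq_of_lt (by omega)]

private lemma sval (m i : ℕ) (hm : 1 ≤ m) (hi : i < m) :
    (i + 1 = m ∧ (i + 1) % m = 0) ∨ (i + 1 < m ∧ (i + 1) % m = i + 1) := by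
  rcases Nat.lt_or_ge (i + 1) m with h | h
  · right; exact ⟨h, Nat.mod_eq_of_lt h⟩
  · left
    have he : i + 1 = m := by omega
    exact ⟨he, by rw [he, Nat.mod_self]⟩

private lemma prevodd (m i : ℕ) (hm : 1 ≤ m) (hi : i < m) :
    (2 * i + 2 * m - 1) % (2 * m) = 2 * ((i + m - 1) % m) + 1 := by
  rcases pval m i hm hi with ⟨h0, he⟩ | ⟨h1, he⟩
  · rw [he]
    subst h0
    rw [show 2 * 0 + 2 * m - 1 = 2 * m - 1 by omega, Nat.mod_eq_of_lt (by omega)]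
    omega
  · rw [he]
    rw [show 2 * i + 2 * m - 1 = (2 * i - 1) + 2 * m by omega, Nat.add_mod_right,
      Nat.mod_eq_of_lt (by omega)]
    omega

/-- A poset cycle of length `2*m ≥ 6` which is not proper admits a chord. -/
theorem statement11 {Q : Type} [PartialOrder Q] [Fintype Q] (m : ℕ) (hm : 3 ≤ m)
    (q : ℕ → Q) (hcyc : IsPosetCycle m q) (hnp : ¬ IsProperPosetCycle m q) :
    HasChord m q := by
  by_contra hnc
  apply hnp
  have hm1 : 1 ≤ m := by omega
  -- arithmetic facts about the "previous" map p i = (i+m-1) % m and successor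
  have plt : ∀ a < m, (a + m - 1) % m < m := by
    intro a ha; rcases pval m a hm1 ha with ⟨_, he⟩ | ⟨_, he⟩ <;> omega
  have pne : ∀ a < m, (a + m - 1) % m ≠ a := by
    intro a ha; rcases pval m a hm1 ha with ⟨h0, he⟩ | ⟨h1, he⟩ <;> omega
  have ppne : ∀ a < m, ((a + m - 1) % m + m - 1) % m ≠ a := by
    intro a ha
    rcases pval m a hm1 ha with ⟨h0, he⟩ | ⟨h1, he⟩
    · rw [he]
      rcases pval m (m - 1) hm1 (by omega) with ⟨h0', he'⟩ | ⟨h1', he'⟩ <;> omega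
    · rw [he]
      rcases pval m (a - 1) hm1 (by omega) with ⟨h0', he'⟩ | ⟨h1', he'⟩ <;> omega
  have slt : ∀ a < m, (a + 1) % m < m := by
    intro a ha; rcases sval m a hm1 ha with ⟨_, he⟩ | ⟨_, he⟩ <;> omega
  have psucc : ∀ a < m, ((a + 1) % m + m - 1) % m = a := by
    intro a ha
    rcases sval m a hm1 ha with ⟨h0, he⟩ | ⟨h1, he⟩
    · rw [he]
      rcases pval m 0 hm1 (by omega) with ⟨h0', he'⟩ | ⟨h1', he'⟩ <;> omega
    · rw [he]
      rcases pval m (a + 1) hm1 (by omega) with ⟨h0', he'⟩ | ⟨h1', he'⟩ <;> omega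
  have pns : ∀ a < m, (a + m - 1) % m ≠ (a + 1) % m := by
    intro a ha
    rcases pval m a hm1 ha with ⟨h0, he⟩ | ⟨h1, he⟩ <;>
      rcases sval m a hm1 ha with ⟨h0', he'⟩ | ⟨h1', he'⟩ <;> omega
  -- basic cycle inequalities
  have hup : ∀ a < m, q (2 * a) ≤ q (2 * a + 1) := fun a ha => (hcyc a ha).1
  have hdn : ∀ a < m, q (2 * a) ≤ q (2 * ((a + m - 1) % m) + 1) := by
    intro a ha
    have h := (hcyc a ha).2
    rwa [prevodd m a hm1 ha] at h
  -- key consequence of having no chord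
  have K : ∀ a < m, ∀ b < m, q (2 * a) ≤ q (2 * b + 1) → b = a ∨ b = (a + m - 1) % m := by
    intro a ha b hb hle
    by_contra h
    push_neg at h
    exact hnc ⟨a, ha, b, hb, h.1, by rw [prevodd m a hm1 ha]; omega, hle⟩
  -- even-indexed elements are pairwise incomparable
  have even_incomp : ∀ i < m, ∀ j < m, i ≠ j → ¬ q (2 * i) ≤ q (2 * j) := by
    intro i hi j hj hij hle
    have h1 := K i hi j hj (hle.trans (hup j hj))
    have hji : j = (i + m - 1) % m := h1.resolve_left (fun h => hij h.symm)
    have h2 := K i hi ((j + m - 1) % m) (plt j hj) (hle.trans (hdn j hj))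
    rcases h2 with h2 | h2
    · rw [hji] at h2; exact ppne i hi h2
    · rw [← hji] at h2; exact pne j hj h2
  -- odd-indexed elements are pairwise incomparable
  have odd_incomp : ∀ i < m, ∀ j < m, i ≠ j → ¬ q (2 * i + 1) ≤ q (2 * j + 1) := by
    intro i hi j hj hij hle
    have h1 := K i hi j hj ((hup i hi).trans hle)
    have hji : j = (i + m - 1) % m := h1.resolve_left (fun h => hij h.symm)
    have hds : q (2 * ((i + 1) % m)) ≤ q (2 * i + 1) := by
      have h := hdn ((i + 1) % m) (slt i hi)
      rwa [psucc i hi] at h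
    have h2 := K ((i + 1) % m) (slt i hi) j hj (hds.trans hle)
    rcases h2 with h2 | h2
    · rw [hji] at h2; exact pns i hi h2
    · rw [psucc i hi] at h2; exact hij h2.symm
  -- no even-indexed element equals an odd-indexed one
  have M : ∀ a < m, ∀ b < m, q (2 * a) ≠ q (2 * b + 1) := by
    intro a ha b hb heq
    rcases K a ha b hb heq.le with h1 | h1
    · subst b
      have hds : q (2 * ((a + 1) % m)) ≤ q (2 * a + 1) := by
        have h := hdn ((a + 1) % m) (slt a ha)
        rwa [psucc a ha] at h
      have hch : q (2 * ((a + 1) % m)) ≤ q (2 * ((a + m - 1) % m) + 1) :=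
        hds.trans (heq.ge.trans (hdn a ha))
      rcases K ((a + 1) % m) (slt a ha) ((a + m - 1) % m) (plt a ha) hch with h2 | h2
      · exact pns a ha h2
      · rw [psucc a ha] at h2; exact pne a ha h2
    · subst b
      have hch : q (2 * ((a + m - 1) % m)) ≤ q (2 * a + 1) :=
        (hup _ (plt a ha)).trans (heq.ge.trans (hup a ha))
      rcases K ((a + m - 1) % m) (plt a ha) a ha hch with h2 | h2
      · exact pne a ha h2.symm
      · exact ppne a ha h2.symm
  refine ⟨?_, even_incomp, odd_incomp⟩
  intro i hi j hj hij heq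
  obtain ⟨a, ha⟩ : ∃ a, i = 2 * a ∨ i = 2 * a + 1 := ⟨i / 2, by omega⟩
  obtain ⟨b, hb⟩ : ∃ b, j = 2 * b ∨ j = 2 * b + 1 := ⟨j / 2, by omega⟩
  rcases ha with ha | ha <;> rcases hb with hb | hb <;> subst ha <;> subst hb
  · exact even_incomp a (by omega) b (by omega) (by omega) heq.le
  · exact M a (by omega) b (by omega) heq
  · exact M b (by omega) a (by omega) heq.symm
  · exact odd_incomp a (by omega) b (by omega) (by omega) heq.le
end

section
/- Let P and Q be any finite posets and K a field. The ideal J_{P,Q} is generated by quadratic binomials if and only if it is generated by quadratic squarefree binomials. -/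
open MvPolynomial

/-- A binomial `monomial u 1 - monomial v 1` which is quadratic and squarefree. -/
def IsQuadraticSquarefreeBinomial {σ K : Type} [Field K] (f : MvPolynomial σ K) : Prop :=
  ∃ u v : σ →₀ ℕ, (u.sum fun _ e => e) = 2 ∧ (v.sum fun _ e => e) = 2 ∧
    (∀ i, u i ≤ 1) ∧ (∀ i, v i ≤ 1) ∧ f = monomial u 1 - monomial v 1

section Aux

open scoped Classical

variable {K P Q : Type} [Field K] [PartialOrder P] [Fintype P] [PartialOrder Q] [Fintype Q]

set_option linter.unusedSectionVars false

/-- The exponent vector of the image of `monomial w 1` under the isotonian map. -/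
noncomputable def expMapAux (w : (P →o Q) →₀ ℕ) : (P × Q) →₀ ℕ :=
  w.sum fun φ k => k • ∑ p : P, Finsupp.single (p, φ p) 1

lemma expMapAux_apply (w : (P →o Q) →₀ ℕ) (p : P) (q : Q) :
    expMapAux w (p, q) = ∑ φ ∈ w.support, w φ * (if φ p = q then 1 else 0) := by
  rw [expMapAux, Finsupp.sum, Finsupp.finset_sum_apply]
  refine Finset.sum_congr rfl fun φ _ => ?_
  rw [Finsupp.smul_apply, Finsupp.finset_sum_apply]
  congr 1
  rw [Finset.sum_eq_single_of_mem p (Finset.mem_univ p)]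
  · simp [Finsupp.single_apply, Prod.ext_iff, eq_comm]
  · intro p' _ hp'
    simp only [Finsupp.single_apply, Prod.ext_iff]
    exact if_neg (fun h => hp' h.1)

lemma isotonianMap_monomial_s13 (w : (P →o Q) →₀ ℕ) :
    isotonianMap K P Q (monomial w 1) = monomial (expMapAux w) 1 := by
  rw [isotonianMap, aeval_monomial, map_one, one_mul]
  have hX : ∀ φ : P →o Q, (∏ p : P, (X (p, φ p) : MvPolynomial (P × Q) K)) =
      monomial (∑ p : P, Finsupp.single (p, φ p) 1) 1 := by
    intro φ
    rw [monomial_sum_one]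
    rfl
  calc (w.prod fun φ k => (∏ p : P, (X (p, φ p) : MvPolynomial (P × Q) K)) ^ k)
      = w.prod fun φ k => monomial (k • ∑ p : P, Finsupp.single (p, φ p) 1) 1 := by
        refine Finset.prod_congr rfl fun φ _ => ?_
        simp only [hX, monomial_pow, one_pow]
    _ = monomial (expMapAux w) 1 := by
        rw [expMapAux, Finsupp.sum, Finsupp.prod, monomial_sum_one]

lemma mem_isotonianIdeal_iff (u v : (P →o Q) →₀ ℕ) :
    (monomial u 1 - monomial v 1 : MvPolynomial (P →o Q) K) ∈ isotonianIdeal K P Q ↔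
      expMapAux u = expMapAux v := by
  rw [isotonianIdeal, RingHom.mem_ker, map_sub, sub_eq_zero, isotonianMap_monomial_s13,
    isotonianMap_monomial_s13, monomial_eq_monomial_iff]
  constructor
  · rintro (⟨h, -⟩ | ⟨h, -⟩)
    · exact h
    · exact absurd h one_ne_zero
  · intro h; exact Or.inl ⟨h, rfl⟩

lemma eq_of_expMapAux_eq {u v : (P →o Q) →₀ ℕ} (hu : (u.sum fun _ e => e) = 2)
    (hv : (v.sum fun _ e => e) = 2) {φ : P →o Q} (hφ : 2 ≤ u φ)
    (hE : expMapAux u = expMapAux v) : u = v := by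
  have hφs : φ ∈ u.support := Finsupp.mem_support_iff.mpr (by omega)
  have hsuppu : u.support ⊆ {φ} := by
    intro ψ hψ
    rw [Finset.mem_singleton]
    by_contra hne
    have hsub : ({φ, ψ} : Finset (P →o Q)) ⊆ u.support := by
      intro x hx
      rcases Finset.mem_insert.mp hx with rfl | hx
      · exact hφs
      · rwa [Finset.mem_singleton.mp hx]
    have h2 : u φ + u ψ ≤ u.sum fun _ e => e := by
      rw [Finsupp.sum, ← Finset.sum_pair (fun h => hne h.symm)]
      exact Finset.sum_le_sum_of_subset hsub
    have := Finsupp.mem_support_iff.mp hψ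
    omega
  have hu2 : u = Finsupp.single φ 2 := by
    have h1 := Finsupp.support_subset_singleton.mp hsuppu
    rw [h1] at hu
    rw [Finsupp.sum_single_index rfl] at hu
    rw [h1, hu]
  have hsuppv : v.support ⊆ {φ} := by
    intro ψ hψ
    rw [Finset.mem_singleton]
    by_contra hne
    obtain ⟨p, hp⟩ : ∃ p, ψ p ≠ φ p := by
      by_contra h
      push_neg at h
      exact hne (OrderHom.ext _ _ (funext h))
    have hlb : v ψ ≤ expMapAux v (p, ψ p) := by
      rw [expMapAux_apply]
      have := Finset.single_le_sum
        (f := fun χ => v χ * (if χ p = ψ p then 1 else 0))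
        (fun χ _ => Nat.zero_le _) hψ
      simpa using this
    have hub : expMapAux u (p, ψ p) = 0 := by
      rw [hu2, expMapAux_apply]
      have : (Finsupp.single φ 2 : (P →o Q) →₀ ℕ).support = {φ} :=
        Finsupp.support_single_ne_zero φ (by norm_num)
      rw [this, Finset.sum_singleton, if_neg (fun h => hp h.symm)]
      simp
    rw [← hE, hub] at hlb
    exact Finsupp.mem_support_iff.mp hψ (Nat.le_zero.mp hlb)
  have hv2 : v = Finsupp.single φ (v φ) := Finsupp.support_subset_singleton.mp hsuppv
  rw [hv2] at hv
  rw [Finsupp.sum_single_index rfl] at hv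
  rw [hu2, hv2, hv]

lemma isotonian_span_eq :
    Ideal.span {f | f ∈ isotonianIdeal K P Q ∧ IsQuadraticBinomial f}
      = Ideal.span {f | f ∈ isotonianIdeal K P Q ∧ IsQuadraticSquarefreeBinomial f} := by
  apply le_antisymm
  · rw [Ideal.span_le]
    rintro f ⟨hf, u, v, hu, hv, rfl⟩
    by_cases hsf : (∀ i, u i ≤ 1) ∧ (∀ i, v i ≤ 1)
    · exact Ideal.subset_span ⟨hf, u, v, hu, hv, hsf.1, hsf.2, rfl⟩
    · have hE : expMapAux u = expMapAux v := (mem_isotonianIdeal_iff u v).mp hf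
      have huv : u = v := by
        rcases not_and_or.mp hsf with h | h
        · push_neg at h; obtain ⟨φ, hφ⟩ := h
          exact eq_of_expMapAux_eq hu hv (φ := φ) (by omega) hE
        · push_neg at h; obtain ⟨φ, hφ⟩ := h
          exact (eq_of_expMapAux_eq hv hu (φ := φ) (by omega) hE.symm).symm
      rw [huv, sub_self]
      exact Submodule.zero_mem _
  · rw [Ideal.span_le]
    rintro f ⟨hf, u, v, hu, hv, _, _, rfl⟩
    exact Ideal.subset_span ⟨hf, u, v, hu, hv, rfl⟩

end Aux

/-- `J_{P,Q}` is generated by quadratic binomials iff it is generated by quadratic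
squarefree binomials. -/
theorem statement13 (K P Q : Type) [Field K] [PartialOrder P] [Fintype P]
    [PartialOrder Q] [Fintype Q] :
    (isotonianIdeal K P Q =
        Ideal.span {f | f ∈ isotonianIdeal K P Q ∧ IsQuadraticBinomial f}) ↔
      (isotonianIdeal K P Q =
        Ideal.span {f | f ∈ isotonianIdeal K P Q ∧ IsQuadraticSquarefreeBinomial f}) := by
  rw [isotonian_span_eq]
end
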